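/- Let p and q be distinct odd primes and n = pq. Then the distance energy of the graph ICG_n({1, p}) equals DE(ICG_n({1, p})) = 4q(p − 1). -/

import Mathlib

open scoped Classical

/-- The integral circulant graph `ICG_n(D)`: vertices `0,…,n-1` (as `ZMod n`), with `a ~ b` iff
`gcd(a-b, n) ∈ D`. -/
def ICG (n : ℕ) (D : Finset ℕ) : SimpleGraph (ZMod n) where
  Adj a b := a ≠ b ∧ Int.gcd ((a.val : ℤ) - (b.val : ℤ)) n ∈ D
  symm := ⟨by
    rintro a b ⟨hne, h⟩
    refine ⟨hne.symm, ?_⟩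
    rwa [show ((b.val : ℤ) - a.val) = -((a.val : ℤ) - b.val) by ring, Int.neg_gcd]⟩
  loopless := ⟨by rintro a ⟨h, -⟩; exact h rfl⟩

/-- The distance matrix of a graph. -/
noncomputable def distMatrix {V : Type} [Fintype V] (G : SimpleGraph V) : Matrix V V ℝ :=
  Matrix.of fun i j => (G.dist i j : ℝ)

/-- The distance energy: the sum of the absolute values of the eigenvalues (with multiplicity)
of the distance matrix, i.e. of the roots of its characteristic polynomial. -/
noncomputable def distEnergy {V : Type} [Fintype V] [DecidableEq V] (G : SimpleGraph V) : ℝ :=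
  ((distMatrix G).charpoly.roots.map fun x => |x|).sum

/-! For distinct primes `p, q` we have `gcd(a - b, pq) ∈ {1, p}` exactly when `a ≢ b (mod q)`, so
`ICG_{pq}({1, p})` is the complete `q`-partite graph whose parts are the residue classes mod `q`,
each of size `p`. Its distance matrix is `B + J - 2I`, where `J` is the all-ones matrix and
`B = PPᵀ` for the part-incidence matrix `P`. Since `PᵀP = pI`, the matrix `B` has eigenvalues `p`
(multiplicity `q`) and `0`, and `J` only moves the all-ones vector, a `p`-eigenvector of `B`. Hence
the distance matrix has eigenvalues `pq + p - 2` (once), `p - 2` (`q - 1` times) and `-2`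
(`pq - q` times), whose absolute values add up to `4q(p - 1)`. -/

open Matrix Polynomial Finset

section FiberIncidence

variable (K : Type*) [Field K] {V W : Type*} [DecidableEq W] (f : V → W) {m : ℕ}

def fiberIncidence : Matrix V W K := of fun v w => if f v = w then 1 else 0

variable {K f}

lemma fiberIncidence_mul_transpose_apply [Fintype W] (i j : V) :
    (fiberIncidence K f * (fiberIncidence K f)ᵀ) i j = if f i = f j then 1 else 0 := by
  simp [fiberIncidence, mul_apply]

variable (K f) in
def multipartiteDistMatrix [DecidableEq V] : Matrix V V K :=
  of fun i j => if i = j then 0 else if f i = f j then 2 else 1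

lemma multipartiteDistMatrix_eq [DecidableEq V] [Fintype W] :
    multipartiteDistMatrix K f =
      fiberIncidence K f * (fiberIncidence K f)ᵀ + (of fun _ _ => 1) - 2 := by
  ext i j
  rw [Matrix.sub_apply, Matrix.add_apply, fiberIncidence_mul_transpose_apply, Matrix.ofNat_apply]
  by_cases hij : i = j
  · norm_num [multipartiteDistMatrix, hij]
  · by_cases hf : f i = f j <;> norm_num [multipartiteDistMatrix, hij, hf]

variable [Fintype V]

lemma transpose_fiberIncidence_mul_self (hfib : ∀ w, #{v | f v = w} = m) :
    (fiberIncidence K f)ᵀ * fiberIncidence K f = (m : Matrix W W K) := by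
  ext w w'
  rw [Matrix.natCast_apply]
  simp only [fiberIncidence, mul_apply, transpose_apply, of_apply, mul_boole, ← ite_and,
    Finset.sum_boole]
  rcases eq_or_ne w w' with rfl | h
  · simp [hfib]
  · rw [Finset.filter_false_of_mem fun v _ ⟨h₁, h₂⟩ => h (h₂.symm.trans h₁)]
    simp [h]

lemma transpose_fiberIncidence_mul_allOnes (hfib : ∀ w, #{v | f v = w} = m) :
    (fiberIncidence K f)ᵀ * (of fun _ _ => 1 : Matrix V V K) = (m : K) • of fun _ _ => 1 := by
  ext w v
  simp [fiberIncidence, mul_apply, hfib]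

lemma card_eq_mul_card_of_card_fiber [Fintype W] (hfib : ∀ w, #{v | f v = w} = m) :
    Fintype.card V = m * Fintype.card W := by
  rw [← Finset.card_univ, card_eq_sum_card_fiberwise (f := f) (fun _ _ => mem_univ _)]
  simp [hfib, mul_comm]

lemma charpoly_fiberIncidence_mul_transpose [Fintype W] [DecidableEq V] (hm : m ≠ 0)
    (hfib : ∀ w, #{v | f v = w} = m) :
    (fiberIncidence K f * (fiberIncidence K f)ᵀ).charpoly =
      X ^ (Fintype.card V - Fintype.card W) * (X - (m : K[X])) ^ Fintype.card W := by
  have hle : Fintype.card W ≤ Fintype.card V := by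
    rw [card_eq_mul_card_of_card_fiber hfib]
    exact Nat.le_mul_of_pos_left _ (Nat.pos_of_ne_zero hm)
  rw [charpoly_mul_comm_of_le _ _ hle, transpose_fiberIncidence_mul_self hfib, charpoly_natCast]

lemma det_scalar_sub_fiberIncidence_mul_transpose_sub_allOnes [Fintype W] [DecidableEq V]
    (hm : m ≠ 0) (hfib : ∀ w, #{v | f v = w} = m) {c : K} (hc : c ≠ m) :
    (scalar V c - fiberIncidence K f * (fiberIncidence K f)ᵀ - of fun _ _ => 1).det =
      c ^ (Fintype.card V - Fintype.card W) * (c - m) ^ Fintype.card W *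
        (1 - Fintype.card V / (c - m)) := by
  set P := fiberIncidence K f
  set J : Matrix V V K := of fun _ _ => 1
  have hcm : c - m ≠ 0 := sub_ne_zero.mpr hc
  have hPJ : P * (of fun _ _ => 1 : Matrix W V K) = J := by
    ext i j
    simp [P, J, fiberIncidence, mul_apply]
  have hJ : (scalar V c - P * Pᵀ) * J = (c - m) • J := by
    rw [Matrix.sub_mul, Matrix.mul_assoc, transpose_fiberIncidence_mul_allOnes hfib,
      Matrix.mul_smul, hPJ, sub_smul, scalar_apply, ← smul_one_eq_diagonal, Matrix.smul_mul,
      Matrix.one_mul]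
  have hfactor : scalar V c - P * Pᵀ - J = (scalar V c - P * Pᵀ) * (1 - (c - m)⁻¹ • J) := by
    rw [Matrix.mul_sub, Matrix.mul_one, Matrix.mul_smul, hJ, smul_smul, inv_mul_cancel₀ hcm,
      one_smul]
  have hdetJ : (1 - (c - m)⁻¹ • J).det = 1 - Fintype.card V / (c - m) := by
    have : 1 - (c - m)⁻¹ • J =
        1 + replicateCol Unit (fun _ => -(c - m)⁻¹) * replicateRow Unit fun _ : V => (1 : K) := by
      ext i j
      simp [J, mul_apply, sub_eq_add_neg]
    rw [this, det_one_add_replicateCol_mul_replicateRow]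
    simp [dotProduct, div_eq_mul_inv, sub_eq_add_neg]
  rw [hfactor, det_mul, hdetJ, ← eval_charpoly, charpoly_fiberIncidence_mul_transpose hm hfib]
  simp

theorem charpoly_multipartiteDistMatrix [Infinite K] [DecidableEq V] [Fintype W] [Nonempty W]
    (hm : m ≠ 0) (hfib : ∀ w, #{v | f v = w} = m) :
    (multipartiteDistMatrix K f).charpoly =
      ((Multiset.replicate (Fintype.card V - Fintype.card W) (-2) +
        Multiset.replicate (Fintype.card W - 1) ((m : K) - 2) +
        {(Fintype.card V : K) + m - 2}).map fun a => X - C a).prod := by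
  -- Comparing values suffices; away from `t = m - 2` the determinant lemma computes them.
  refine eq_of_infinite_eval_eq _ _ (((Set.finite_singleton ((m : K) - 2)).infinite_compl).mono ?_)
  intro t ht
  have hc : t + 2 ≠ m := fun h => ht (eq_sub_of_add_eq h)
  have hshift : scalar V t - multipartiteDistMatrix K f =
      scalar V (t + 2) - fiberIncidence K f * (fiberIncidence K f)ᵀ - of fun _ _ => 1 := by
    rw [multipartiteDistMatrix_eq, map_add, map_ofNat]
    abel
  obtain ⟨k, hk⟩ : ∃ k, Fintype.card W = k + 1 := Nat.exists_eq_add_one.mpr Fintype.card_pos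
  have hcm : t + 2 - m ≠ 0 := sub_ne_zero.mpr hc
  rw [Set.mem_ofPred_eq, eval_charpoly, hshift,
    det_scalar_sub_fiberIncidence_mul_transpose_sub_allOnes hm hfib hc]
  simp only [Multiset.map_add, Multiset.prod_add, Multiset.map_replicate, Multiset.prod_replicate,
    Multiset.map_singleton, Multiset.prod_singleton, eval_mul, eval_pow, eval_sub, eval_X, eval_C,
    hk, Nat.add_sub_cancel]
  field_simp
  ring

end FiberIncidence

namespace SimpleGraph

variable {V W : Type} [DecidableEq V] [DecidableEq W] {f : V → W}

lemma dist_comap_top [Nontrivial W] (hf : f.Surjective) (u v : V) :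
    ((⊤ : SimpleGraph W).comap f).dist u v = if u = v then 0 else if f u = f v then 2 else 1 := by
  split_ifs with huv hf_eq
  · exact huv ▸ dist_self
  · obtain ⟨w, hw⟩ := exists_ne (f u)
    obtain ⟨x, rfl⟩ := hf w
    rw [dist, ENat.toNat_eq_iff two_ne_zero, Nat.cast_ofNat, edist_eq_two_iff]
    exact ⟨huv, by simp [hf_eq], x, by simp [mem_commonNeighbors, hw.symm, ← hf_eq]⟩
  · exact dist_eq_one_iff_adj.mpr (by simpa using hf_eq)

lemma distMatrix_comap_top [Fintype V] [Nontrivial W] (hf : f.Surjective) :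
    distMatrix ((⊤ : SimpleGraph W).comap f) = multipartiteDistMatrix ℝ f := by
  ext u v
  rw [distMatrix, of_apply, dist_comap_top hf]
  split_ifs <;> simp [multipartiteDistMatrix, *]

theorem distEnergy_comap_top [Fintype V] [Fintype W] [Nontrivial W] {m : ℕ} (hm : 2 ≤ m)
    (hfib : ∀ w, #{v | f v = w} = m) :
    distEnergy ((⊤ : SimpleGraph W).comap f) = 4 * Fintype.card W * ((m : ℝ) - 1) := by
  have hf : f.Surjective := fun w => by
    obtain ⟨v, hv⟩ := Finset.card_pos.mp (hfib w ▸ (by omega : 0 < m))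
    exact ⟨v, (Finset.mem_filter.mp hv).2⟩
  have hcard := card_eq_mul_card_of_card_fiber hfib
  have hW : 1 ≤ Fintype.card W := Fintype.card_pos
  have hm' : (2 : ℝ) ≤ m := by exact_mod_cast hm
  rw [distEnergy, distMatrix_comap_top hf, charpoly_multipartiteDistMatrix (by omega) hfib,
    roots_multiset_prod_X_sub_C]
  simp only [Multiset.map_add, Multiset.sum_add, Multiset.map_replicate, Multiset.sum_replicate,
    Multiset.map_singleton, Multiset.sum_singleton, nsmul_eq_mul]
  have hV : (0 : ℝ) ≤ Fintype.card V := Nat.cast_nonneg _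
  rw [abs_neg, abs_two, abs_of_nonneg (by linarith), abs_of_nonneg (by linarith),
    Nat.cast_sub (by nlinarith), Nat.cast_sub hW, hcard]
  push_cast
  ring

end SimpleGraph

lemma Int.gcd_prime_mul_prime_mem_iff {p q : ℕ} (hp : p.Prime) (hq : q.Prime) (hpq : p ≠ q)
    (d : ℤ) :
    d.gcd (p * q : ℕ) ∈ ({1, p} : Finset ℕ) ↔ ¬ (q : ℤ) ∣ d := by
  set g := d.gcd (p * q : ℕ)
  have hg : g ∣ p * q := Int.natAbs_natCast (p * q) ▸ Int.gcd_dvd_natAbs_right d (p * q : ℕ)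
  have hqg : q ∣ g ↔ (q : ℤ) ∣ d :=
    ⟨fun h => (Int.natCast_dvd_natCast.mpr h).trans (Int.gcd_dvd_left d _),
      fun h => Int.natCast_dvd_natCast.mp (Int.dvd_coe_gcd h ⟨p, by push_cast; ring⟩)⟩
  rw [← hqg, mem_insert, mem_singleton, ← Nat.dvd_prime hp]
  refine ⟨fun hgp hqg' => hpq ((Nat.prime_dvd_prime_iff_eq hq hp).mp (hqg'.trans hgp)).symm,
    fun hqg' => ?_⟩
  exact (((Nat.Prime.coprime_iff_not_dvd hq).mpr hqg').symm).dvd_of_dvd_mul_right hg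

lemma ZMod.intCast_dvd_val_sub_val_iff {n q : ℕ} [NeZero n] (h : q ∣ n) (a b : ZMod n) :
    (q : ℤ) ∣ (a.val : ℤ) - b.val ↔ ZMod.castHom h (ZMod q) a = ZMod.castHom h (ZMod q) b := by
  rw [← ZMod.intCast_zmod_eq_zero_iff_dvd, Int.cast_sub, sub_eq_zero, ZMod.castHom_apply,
    ZMod.castHom_apply, ZMod.cast_eq_val, ZMod.cast_eq_val]
  simp

lemma ICG_prime_mul_prime_eq_comap {p q : ℕ} (hp : p.Prime) (hq : q.Prime) (hpq : p ≠ q) :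
    ICG (p * q) {1, p} = (⊤ : SimpleGraph (ZMod q)).comap (ZMod.castHom (dvd_mul_left q p) _) := by
  have : NeZero (p * q) := ⟨Nat.mul_ne_zero hp.ne_zero hq.ne_zero⟩
  ext a b
  simp only [ICG, SimpleGraph.comap_adj, SimpleGraph.top_adj]
  rw [Int.gcd_prime_mul_prime_mem_iff hp hq hpq,
    ZMod.intCast_dvd_val_sub_val_iff (dvd_mul_left q p)]
  exact ⟨And.right, fun h => ⟨fun hab => h (congrArg _ hab), h⟩⟩

lemma ZMod.card_fiber_castHom {p q : ℕ} [NeZero p] [NeZero q] (w : ZMod q) :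
    #{x : ZMod (p * q) | ZMod.castHom (dvd_mul_left q p) _ x = w} = p := by
  set f := ZMod.castHom (dvd_mul_left q p) (ZMod q)
  have hfib : ∀ w, #{x | f x = w} = #{x | f x = 0} := fun w =>
    AddMonoidHom.card_fiber_eq_of_mem_range f (ZMod.castHom_surjective _ w) ⟨0, map_zero f⟩
  have hcard := card_eq_mul_card_of_card_fiber hfib
  rw [ZMod.card, ZMod.card] at hcard
  rw [hfib]
  exact (Nat.eq_of_mul_eq_mul_right (NeZero.pos q) hcard).symm

theorem distEnergy_ICG_pq_one_p_general (p q : ℕ) (hp : p.Prime) (hq : q.Prime) (hpq : p ≠ q) (n : ℕ)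
    [NeZero n] (hn : n = p * q) :
    distEnergy (ICG n {1, p}) = 4 * (q : ℝ) * ((p : ℝ) - 1) := by
  subst hn
  have : NeZero p := ⟨hp.ne_zero⟩
  have : NeZero q := ⟨hq.ne_zero⟩
  have : Fact (1 < q) := ⟨hq.one_lt⟩
  rw [ICG_prime_mul_prime_eq_comap hp hq hpq,
    SimpleGraph.distEnergy_comap_top hp.two_le ZMod.card_fiber_castHom, ZMod.card]

/-- for distinct odd primes `p, q` and `n = pq`, the distance energy of
`ICG_n({1, p})` equals `4q(p-1)`. -/
theorem distEnergy_ICG_pq_one_p (p q : ℕ) (hp : p.Prime) (hq : q.Prime) (hpodd : Odd p)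
    (hqodd : Odd q) (hpq : p ≠ q) (n : ℕ) [NeZero n] (hn : n = p * q) :
    distEnergy (ICG n {1, p}) = 4 * (q : ℝ) * ((p : ℝ) - 1) :=
  distEnergy_ICG_pq_one_p_general p q hp hq hpq n hn
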